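/- Let $\mathcal{X} = (\{1,\dots,v\}, \{R_i\}_{i=0}^d)$ be a symmetric association scheme with adjacency matrices $A_0 = I, A_1, \dots, A_d$, and let $A$ be a matrix in the linear span (over $\mathbb{R}$) of $A_0,\dots,A_d$. Then: (1) the characteristic polynomial of $A[\bar{\{x\}}]$ (the principal submatrix omitting one index $x$) is the same for all $x \in \{1,\dots,v\}$; and (2) for each $i \in \{1,\dots,d\}$, the characteristic polynomial of $A[\overline{\{x,y\}}]$ is the same for all pairs $\{x,y\}$ with $(x,y) \in R_i$. -/

import Mathlib

/-!
Jacobi's complementary-minor identity `det C[sᶜ] = det C * det (C⁻¹)[s]`, applied to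
`C = t - B`, turns `χ(B[sᶜ])(t)` into `χ(B)(t)` times a minor of `(t - B)⁻¹` on `s`. When `t` is
not an eigenvalue of `B`, Cayley–Hamilton writes `(t - B)⁻¹` as a polynomial in `t - B`, so it lies
in the Bose–Mesner algebra, whose matrices are constant on each relation. A minor on `{x}` or on
a pair `{x, y}` is a polynomial in the entries `N x x`, `N x y`, `N y x`, `N y y`, so it depends
only on the relation of `(x, y)`; two characteristic polynomials that agree at all but finitely
many `t` are equal.
-/

open Matrix Finset Polynomial

def principalSub {R : Type*} {n : ℕ} (A : Matrix (Fin n) (Fin n) R)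
    (s : Finset (Fin n)) : Matrix s s R :=
  A.submatrix (fun i => (i : Fin n)) (fun i => (i : Fin n))

theorem Submodule.mul_mem_span_of_mul_mem {R A : Type*} [CommSemiring R] [Semiring A]
    [Algebra R A] {X : Set A} (hX : ∀ a ∈ X, ∀ b ∈ X, a * b ∈ span R X) {a b : A}
    (ha : a ∈ span R X) (hb : b ∈ span R X) : a * b ∈ span R X := by
  have hle : span R X * span R X ≤ span R X := by
    rw [span_mul_span, span_le]
    rintro _ ⟨a, ha, b, hb, rfl⟩
    exact hX a ha b hb
  exact hle (mul_mem_mul ha hb)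

theorem Matrix.nonsing_inv_mem_subalgebra {K m : Type*} [Field K] [Fintype m] [DecidableEq m]
    {S : Subalgebra K (Matrix m m K)} {N : Matrix m m K} (hN : N ∈ S) (h : IsUnit N.det) :
    N⁻¹ ∈ S := by
  have hc : -N.charpoly.coeff 0 ≠ 0 := by
    rw [neg_ne_zero]
    rintro hc
    rw [det_eq_sign_charpoly_coeff, hc, mul_zero] at h
    exact not_isUnit_zero h
  -- Cayley–Hamilton, with the constant term of `χ` split off.
  have hq : N * aeval N N.charpoly.divX = algebraMap K _ (-N.charpoly.coeff 0) := by
    have := congrArg (aeval N) (divX_mul_X_add N.charpoly)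
    rw [aeval_self_charpoly, mul_comm, map_add, map_mul, aeval_X, aeval_C] at this
    rw [map_neg, eq_neg_iff_add_eq_zero, this]
  rw [inv_eq_right_inv (B := (-N.charpoly.coeff 0)⁻¹ • aeval N N.charpoly.divX)]
  · rw [← aeval_subalgebra_coe _ S ⟨N, hN⟩]
    exact S.smul_mem (SetLike.coe_mem _) _
  · rw [Matrix.mul_smul, hq, Algebra.algebraMap_eq_smul_one, smul_smul, inv_mul_cancel₀ hc,
      one_smul]

section PrincipalSub

variable {R : Type*} [CommRing R] {n : ℕ}

theorem det_eq_det_principalSub_of_col_eq_one (M : Matrix (Fin n) (Fin n) R)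
    (s : Finset (Fin n)) (h : ∀ j ∉ s, ∀ i, M i j = (1 : Matrix (Fin n) (Fin n) R) i j) :
    M.det = (principalSub M s).det := by
  have h_one : toSquareBlockProp M (· ∉ s) = 1 := by
    ext i j
    simp [toSquareBlockProp, h j j.2, one_apply, Subtype.ext_iff]
  rw [M.twoBlockTriangular_det' (· ∈ s)
    (fun i hi j hj => by rw [h j hj, one_apply_ne (ne_of_mem_of_not_mem hi hj)]), h_one,
    det_one, mul_one]
  -- the two sides differ in their `Fintype` instances on `s`
  convert rfl
  rfl

/-- Jacobi's complementary-minor identity. -/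
theorem det_principalSub_compl (C : Matrix (Fin n) (Fin n) R) (hC : IsUnit C.det)
    (s : Finset (Fin n)) :
    (principalSub C sᶜ).det = C.det * (principalSub C⁻¹ s).det := by
  set P : Matrix (Fin n) (Fin n) R := diagonal fun i => if i ∈ s then 1 else 0
  set Q : Matrix (Fin n) (Fin n) R := diagonal fun i => if i ∈ s then 0 else 1
  -- `C⁻¹ * P + Q` is `C⁻¹` on the columns in `s` and the identity elsewhere.
  have hCE : C * (C⁻¹ * P + Q) = P + C * Q := by
    rw [mul_add, ← Matrix.mul_assoc, mul_nonsing_inv C hC, Matrix.one_mul]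
  have h₁ : (P + C * Q).det = (principalSub C sᶜ).det := by
    rw [det_eq_det_principalSub_of_col_eq_one _ sᶜ]
    · congr 1
      ext i j
      simp [principalSub, P, Q, mul_diagonal, diagonal_apply,
        Finset.mem_compl.mp i.2, Finset.mem_compl.mp j.2]
    · intro j hj i
      rw [Finset.mem_compl, not_not] at hj
      rcases eq_or_ne i j with rfl | hij
      · simp [P, Q, mul_diagonal, hj]
      · simp [P, Q, mul_diagonal, hij, hj]
  have h₂ : (C⁻¹ * P + Q).det = (principalSub C⁻¹ s).det := by
    rw [det_eq_det_principalSub_of_col_eq_one _ s]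
    · congr 1
      ext i j
      simp [principalSub, P, Q, mul_diagonal, diagonal_apply, i.2]
    · intro j hj i
      rcases eq_or_ne i j with rfl | hij
      · simp [P, Q, mul_diagonal, hj]
      · simp [P, Q, mul_diagonal, hij, hj]
  rw [← h₁, ← hCE, det_mul, h₂]

theorem eval_charpoly_principalSub (B : Matrix (Fin n) (Fin n) R) (s : Finset (Fin n)) (t : R) :
    (principalSub B s).charpoly.eval t = (principalSub (scalar _ t - B) s).det := by
  rw [eval_charpoly]
  congr 1
  ext i j
  rcases eq_or_ne i j with rfl | hij
  · simp [principalSub]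
  · simp [principalSub, hij, Subtype.val_injective.ne hij]

theorem det_principalSub_singleton (N : Matrix (Fin n) (Fin n) R) (x : Fin n) :
    (principalSub N {x}).det = N x x := by
  rw [det_unique]
  rfl

theorem det_principalSub_pair (N : Matrix (Fin n) (Fin n) R) {x y : Fin n} (hxy : x ≠ y) :
    (principalSub N {x, y}).det = N x x * N y y - N x y * N y x := by
  have hx : x ∈ ({x, y} : Finset (Fin n)) := by simp
  have hy : y ∈ ({x, y} : Finset (Fin n)) := by simp
  let e : Fin 2 ≃ ({x, y} : Finset (Fin n)) := by
    refine Equiv.ofBijective ![⟨x, hx⟩, ⟨y, hy⟩] ⟨fun a b hab => ?_, fun z => ?_⟩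
    · fin_cases a <;> fin_cases b <;> simp_all [Subtype.ext_iff, eq_comm]
    · rcases Finset.mem_insert.mp z.2 with h | h
      · exact ⟨0, Subtype.ext h.symm⟩
      · exact ⟨1, Subtype.ext (Finset.mem_singleton.mp h).symm⟩
  rw [← det_submatrix_equiv_self e, det_fin_two]
  rfl

end PrincipalSub

theorem charpoly_principalSub_compl_eq {K : Type*} [Field K] [Infinite K] {n : ℕ}
    {S : Subalgebra K (Matrix (Fin n) (Fin n) K)} {s₁ s₂ : Finset (Fin n)}
    (hdet : ∀ N ∈ S, (principalSub N s₁).det = (principalSub N s₂).det)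
    {B : Matrix (Fin n) (Fin n) K} (hB : B ∈ S) :
    (principalSub B s₁ᶜ).charpoly = (principalSub B s₂ᶜ).charpoly := by
  refine eq_of_infinite_eval_eq _ _
    ((finite_setOfPred_isRoot B.charpoly_monic.ne_zero).infinite_compl.mono fun t ht => ?_)
  have hunit : IsUnit (scalar _ t - B).det := by
    rwa [← eval_charpoly, isUnit_iff_ne_zero]
  have hinv : (scalar _ t - B)⁻¹ ∈ S :=
    nonsing_inv_mem_subalgebra (S.sub_mem (S.algebraMap_mem t) hB) hunit
  simp only [Set.mem_ofPred_eq, eval_charpoly_principalSub, det_principalSub_compl _ hunit,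
    hdet _ hinv]

theorem apply_eq_apply_of_mem_span {R ι m : Type*} [Semiring R] {A : ι → Matrix m m R}
    {M : Matrix m m R} (hM : M ∈ Submodule.span R (Set.range A)) {x y x' y' : m}
    (h : ∀ k, A k x y = A k x' y') : M x y = M x' y' := by
  induction hM using Submodule.span_induction with
  | mem N hN =>
    obtain ⟨k, rfl⟩ := hN
    exact h k
  | zero => rfl
  | add N N' _ _ hN hN' => simp only [Matrix.add_apply, hN, hN']
  | smul r N _ hN => simp only [Matrix.smul_apply, hN]

section AssociationScheme

variable {R ι m : Type*} [Ring R] [PartialOrder R] [IsOrderedRing R] [Fintype ι]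
  [DecidableEq ι] {A : ι → Matrix m m R}

theorem apply_eq_ite_of_apply_eq_one (h01 : ∀ i x y, A i x y = 0 ∨ A i x y = 1)
    (hsum : ∑ i, A i = of fun _ _ => 1) {i : ι} {x y : m} (hxy : A i x y = 1) (k : ι) :
    A k x y = if k = i then 1 else 0 := by
  have hrest : ∑ k ∈ univ.erase i, A k x y = 0 := by
    have := congr_fun₂ hsum x y
    rw [Matrix.sum_apply, of_apply, ← add_sum_erase _ _ (mem_univ i), hxy] at this
    simpa using this
  split_ifs with hk
  · rw [hk, hxy]
  · refine (sum_eq_zero_iff_of_nonneg fun j _ => ?_).mp hrest k (mem_erase.mpr ⟨hk, mem_univ k⟩)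
    rcases h01 j x y with h | h <;> simp [h]

theorem apply_eq_apply_of_mem_span_of_apply_eq_one
    (h01 : ∀ i x y, A i x y = 0 ∨ A i x y = 1) (hsum : ∑ i, A i = of fun _ _ => 1)
    {M : Matrix m m R} (hM : M ∈ Submodule.span R (Set.range A)) {i : ι} {x y x' y' : m}
    (hxy : A i x y = 1) (hxy' : A i x' y' = 1) : M x y = M x' y' :=
  apply_eq_apply_of_mem_span hM fun k => by
    rw [apply_eq_ite_of_apply_eq_one h01 hsum hxy, apply_eq_ite_of_apply_eq_one h01 hsum hxy']

theorem ne_of_apply_eq_one [Nontrivial R] [DecidableEq m]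
    (h01 : ∀ i x y, A i x y = 0 ∨ A i x y = 1) (hsum : ∑ i, A i = of fun _ _ => 1)
    {i₀ i : ι} (hA₀ : A i₀ = 1) (hi : i ≠ i₀) {x y : m} (hxy : A i x y = 1) : x ≠ y := by
  rintro rfl
  have h := apply_eq_ite_of_apply_eq_one h01 hsum (show A i₀ x x = 1 by simp [hA₀]) i
  rw [if_neg hi, hxy] at h
  exact one_ne_zero h

end AssociationScheme

/-- Let `A 0 = I, A 1, …, A d` be the adjacency matrices of a symmetric association
scheme and let `B` be an element of its Bose–Mesner algebra (the span of the `A i`).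
Then (1) the characteristic polynomial of the principal submatrix of `B` omitting one
index is independent of that index, and (2) for each class `i`, the characteristic
polynomial of the principal submatrix of `B` omitting a pair `{x,y}` with `(x,y) ∈ Rᵢ`
depends only on `i`. -/
theorem bose_mesner_charpoly_principal {v d : ℕ}
    (A : Fin (d + 1) → Matrix (Fin v) (Fin v) ℝ)
    (hA0 : A 0 = 1)
    (hsym : ∀ i, (A i)ᵀ = A i)
    (h01 : ∀ i x y, A i x y = 0 ∨ A i x y = 1)
    (hsum : ∑ i, A i = Matrix.of fun _ _ => (1 : ℝ))
    (hmul : ∀ i j, A i * A j ∈ Submodule.span ℝ (Set.range A))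
    (B : Matrix (Fin v) (Fin v) ℝ)
    (hB : B ∈ Submodule.span ℝ (Set.range A)) :
    (∀ x y : Fin v,
      (principalSub B ({x} : Finset (Fin v))ᶜ).charpoly =
        (principalSub B ({y} : Finset (Fin v))ᶜ).charpoly) ∧
    (∀ i : Fin (d + 1), i ≠ 0 →
      ∀ x y x' y' : Fin v, A i x y = 1 → A i x' y' = 1 →
        (principalSub B ({x, y} : Finset (Fin v))ᶜ).charpoly =
          (principalSub B ({x', y'} : Finset (Fin v))ᶜ).charpoly) := by
  have hS : ∀ {M N}, M ∈ Submodule.span ℝ (Set.range A) → N ∈ Submodule.span ℝ (Set.range A) →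
      M * N ∈ Submodule.span ℝ (Set.range A) :=
    Submodule.mul_mem_span_of_mul_mem (by rintro _ ⟨i, rfl⟩ _ ⟨j, rfl⟩; exact hmul i j)
  let S : Subalgebra ℝ (Matrix (Fin v) (Fin v) ℝ) :=
    (Submodule.span ℝ (Set.range A)).toSubalgebra (hA0 ▸ Submodule.subset_span ⟨0, rfl⟩)
      fun _ _ => hS
  have hdiag : ∀ z, A 0 z z = 1 := by simp [hA0]
  have hconst : ∀ N ∈ S, ∀ {i x y x' y'}, A i x y = 1 → A i x' y' = 1 → N x y = N x' y' :=
    fun _ hN _ _ _ _ _ => apply_eq_apply_of_mem_span_of_apply_eq_one h01 hsum hN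
  refine ⟨fun x y => charpoly_principalSub_compl_eq (S := S) (fun N hN => ?_) hB,
    fun i hi x y x' y' hxy hxy' => charpoly_principalSub_compl_eq (S := S) (fun N hN => ?_) hB⟩
  · rw [det_principalSub_singleton, det_principalSub_singleton]
    exact hconst N hN (hdiag x) (hdiag y)
  · have hyx : A i y x = 1 := by rw [← hsym i]; exact hxy
    have hyx' : A i y' x' = 1 := by rw [← hsym i]; exact hxy'
    rw [det_principalSub_pair _ (ne_of_apply_eq_one h01 hsum hA0 hi hxy),
      det_principalSub_pair _ (ne_of_apply_eq_one h01 hsum hA0 hi hxy'),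
      hconst N hN (hdiag x) (hdiag x'), hconst N hN (hdiag y) (hdiag y'), hconst N hN hxy hxy',
      hconst N hN hyx hyx']
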